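/- The function F(h) = ∑_{(n₁,n₂)∈ℤ²} e^{−2h²(n₁²+n₂²)} A_h(n₁,n₂), with A_h(n₁,n₂) = 1 − 16h²n₁² + 24h⁴n₁⁴ + 24h⁴n₁²n₂² − (32/3)h⁶n₁⁶ − 32h⁶n₁⁴n₂² + (128/3)h⁸n₁⁶n₂² − (128/3)h⁸n₁⁴n₂⁴, is differentiable on (0,∞) and its derivative satisfies F'(h) = q₂(h) for every h > 0. -/

import Mathlib

open MeasureTheory

/-- The polynomial `A_h(n₁,n₂)`. -/
noncomputable def Apoly (h : ℝ) (n₁ n₂ : ℤ) : ℝ :=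
  1 - 16 * h ^ 2 * (n₁ : ℝ) ^ 2 + 24 * h ^ 4 * (n₁ : ℝ) ^ 4
    + 24 * h ^ 4 * (n₁ : ℝ) ^ 2 * (n₂ : ℝ) ^ 2
    - (32 / 3) * h ^ 6 * (n₁ : ℝ) ^ 6 - 32 * h ^ 6 * (n₁ : ℝ) ^ 4 * (n₂ : ℝ) ^ 2
    + (128 / 3) * h ^ 8 * (n₁ : ℝ) ^ 6 * (n₂ : ℝ) ^ 2
    - (128 / 3) * h ^ 8 * (n₁ : ℝ) ^ 4 * (n₂ : ℝ) ^ 4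

/-- The polynomial `B_h(n₁,n₂)`. -/
noncomputable def Bpoly (h : ℝ) (n₁ n₂ : ℤ) : ℝ :=
  (8 / 3) * h * (-15 * (n₁ : ℝ) ^ 2 + 60 * h ^ 2 * (n₁ : ℝ) ^ 4
    + 60 * h ^ 2 * (n₁ : ℝ) ^ 2 * (n₂ : ℝ) ^ 2
    - 60 * h ^ 4 * (n₁ : ℝ) ^ 6 - 180 * h ^ 4 * (n₁ : ℝ) ^ 4 * (n₂ : ℝ) ^ 2
    + 16 * h ^ 6 * (n₁ : ℝ) ^ 8 + 192 * h ^ 6 * (n₁ : ℝ) ^ 6 * (n₂ : ℝ) ^ 2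
    - 80 * h ^ 6 * (n₁ : ℝ) ^ 4 * (n₂ : ℝ) ^ 4
    - 64 * h ^ 8 * (n₁ : ℝ) ^ 8 * (n₂ : ℝ) ^ 2
    + 64 * h ^ 8 * (n₁ : ℝ) ^ 6 * (n₂ : ℝ) ^ 4)

/-- The distribution function `F(h) = ∑_{(n₁,n₂)∈ℤ²} e^{-2h²(n₁²+n₂²)} A_h(n₁,n₂)`. -/
noncomputable def Fdist (h : ℝ) : ℝ :=
  ∑' n : ℤ × ℤ, Real.exp (-2 * h ^ 2 * ((n.1 : ℝ) ^ 2 + (n.2 : ℝ) ^ 2)) * Apoly h n.1 n.2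

/-- The density `q₂(h) = ∑_{(n₁,n₂)∈ℤ²∖{(0,0)}} e^{-2h²(n₁²+n₂²)} B_h(n₁,n₂)`. -/
noncomputable def qTwo (h : ℝ) : ℝ :=
  ∑' n : {p : ℤ × ℤ // p ≠ (0, 0)},
    Real.exp (-2 * h ^ 2 * ((n.1.1 : ℝ) ^ 2 + (n.1.2 : ℝ) ^ 2)) * Bpoly h n.1.1 n.1.2


/-!
Each term `e^{-2h²|n|²} A_h(n)` has `h`-derivative `e^{-2h²|n|²} (B_h(n) + E_h(n))`, where the
polynomial `E_h` is odd under `n₁ ↔ n₂`, so its weighted sum over `ℤ²` vanishes; and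
`B_h(0,0) = 0`. Termwise differentiation is justified by domination: with `s = h²n₁²`,
`t = h²n₂²`, the quantities `A_h`, `h B_h`, `h E_h` are polynomials in `s, t` bounded by
`C (1 + s)⁴ (1 + t)⁴ ≤ C' e^{s + t}`, so for `h ≥ a > 0` every term is at most
`C'' e^{-a²|n|²}`, which is summable over `ℤ²`.
-/

open Real
open scoped Nat

theorem summable_exp_neg_mul_sq {c : ℝ} (hc : 0 < c) :
    Summable fun n : ℤ => exp (-c * (n : ℝ) ^ 2) := by
  simpa [← mul_assoc, mul_div_cancel₀ _ pi_ne_zero] using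
    summable_pow_mul_jacobiTheta₂_term_bound 0 (div_pos hc pi_pos) 0

theorem summable_exp_neg_mul_sq_add_sq {c : ℝ} (hc : 0 < c) :
    Summable fun n : ℤ × ℤ => exp (-c * ((n.1 : ℝ) ^ 2 + (n.2 : ℝ) ^ 2)) := by
  simpa only [mul_add, exp_add] using
    (summable_exp_neg_mul_sq hc).mul_of_nonneg (summable_exp_neg_mul_sq hc)
      (fun _ => (exp_pos _).le) (fun _ => (exp_pos _).le)

theorem one_add_pow_le_mul_exp {s : ℝ} (hs : 0 ≤ s) (k : ℕ) :
    (1 + s) ^ k ≤ k ! * exp 1 * exp s := by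
  have := Real.pow_div_factorial_le_exp (1 + s) (by positivity) k
  rw [div_le_iff₀ (by positivity), exp_add] at this
  linarith

theorem abs_exp_neg_two_mul_le {s t P C : ℝ} {k : ℕ} (hs : 0 ≤ s) (ht : 0 ≤ t)
    (hP : |P| ≤ C * (1 + s) ^ k * (1 + t) ^ k) :
    |exp (-2 * (s + t)) * P| ≤ C * (k ! * exp 1) ^ 2 * exp (-(s + t)) := by
  have hC : 0 ≤ C := by
    have := (abs_nonneg P).trans hP
    rw [mul_assoc] at this
    exact nonneg_of_mul_nonneg_left this (by positivity)
  have hexp : exp (-2 * (s + t)) * exp s * exp t = exp (-(s + t)) := by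
    rw [← exp_add, ← exp_add]
    ring_nf
  calc |exp (-2 * (s + t)) * P| = exp (-2 * (s + t)) * |P| := by
        rw [abs_mul, abs_of_pos (exp_pos _)]
    _ ≤ exp (-2 * (s + t)) * (C * (k ! * exp 1 * exp s) * (k ! * exp 1 * exp t)) := by
        gcongr
        refine hP.trans ?_
        gcongr
        exacts [one_add_pow_le_mul_exp hs k, one_add_pow_le_mul_exp ht k]
    _ = C * (k ! * exp 1) ^ 2 * exp (-(s + t)) := by
        rw [← hexp]
        ring

theorem tsum_eq_zero_of_comp_eq_neg {α R : Type*} [NonAssocRing R] [NoZeroDivisors R]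
    [CharZero R] [TopologicalSpace R] [IsTopologicalAddGroup R] [T2Space R] {f : α → R}
    (e : α ≃ α) (hf : ∀ a, f (e a) = -f a) : ∑' a, f a = 0 := by
  rw [← CharZero.neg_eq_self_iff, ← tsum_neg, ← e.tsum_eq f]
  simp only [hf]

noncomputable def Epoly (h : ℝ) (n₁ n₂ : ℤ) : ℝ :=
  4 * h * (n₁ : ℝ) ^ 2 - 4 * h * (n₂ : ℝ) ^ 2
    + 96 * h ^ 5 * (n₁ : ℝ) ^ 4 * (n₂ : ℝ) ^ 2
    - 96 * h ^ 5 * (n₁ : ℝ) ^ 2 * (n₂ : ℝ) ^ 4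
    + (512 / 3) * h ^ 9 * (n₁ : ℝ) ^ 4 * (n₂ : ℝ) ^ 6
    - (512 / 3) * h ^ 9 * (n₁ : ℝ) ^ 6 * (n₂ : ℝ) ^ 4

-- In `s = (y n₁)²`, `t = (y n₂)²`, each bound below plus or minus its polynomial expands
-- with nonnegative coefficients only, which is what `ring_nf; positivity` checks.
theorem abs_Apoly_le (y : ℝ) (n₁ n₂ : ℤ) :
    |Apoly y n₁ n₂| ≤ 50 * (1 + (y * n₁) ^ 2) ^ 4 * (1 + (y * n₂) ^ 2) ^ 4 := by
  unfold Apoly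
  exact abs_le'.2 ⟨sub_nonneg.1 (by ring_nf; positivity), sub_nonneg.1 (by ring_nf; positivity)⟩

theorem abs_Bpoly_le {y : ℝ} (hy : 0 < y) (n₁ n₂ : ℤ) :
    |Bpoly y n₁ n₂| ≤ 512 / y * (1 + (y * n₁) ^ 2) ^ 4 * (1 + (y * n₂) ^ 2) ^ 4 := by
  have h : |y * Bpoly y n₁ n₂| ≤ 512 * (1 + (y * n₁) ^ 2) ^ 4 * (1 + (y * n₂) ^ 2) ^ 4 := by
    unfold Bpoly
    exact abs_le'.2 ⟨sub_nonneg.1 (by ring_nf; positivity), sub_nonneg.1 (by ring_nf; positivity)⟩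
  rw [abs_mul, abs_of_pos hy] at h
  rw [div_mul_eq_mul_div, div_mul_eq_mul_div, le_div_iff₀ hy]
  linarith

theorem abs_Epoly_le {y : ℝ} (hy : 0 < y) (n₁ n₂ : ℤ) :
    |Epoly y n₁ n₂| ≤ 200 / y * (1 + (y * n₁) ^ 2) ^ 4 * (1 + (y * n₂) ^ 2) ^ 4 := by
  have h : |y * Epoly y n₁ n₂| ≤ 200 * (1 + (y * n₁) ^ 2) ^ 4 * (1 + (y * n₂) ^ 2) ^ 4 := by
    unfold Epoly
    exact abs_le'.2 ⟨sub_nonneg.1 (by ring_nf; positivity), sub_nonneg.1 (by ring_nf; positivity)⟩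
  rw [abs_mul, abs_of_pos hy] at h
  rw [div_mul_eq_mul_div, div_mul_eq_mul_div, le_div_iff₀ hy]
  linarith

noncomputable def gaussWeight (y : ℝ) (n : ℤ × ℤ) : ℝ :=
  exp (-2 * y ^ 2 * ((n.1 : ℝ) ^ 2 + (n.2 : ℝ) ^ 2))

theorem norm_gaussWeight_mul_le {a y P C : ℝ} {k : ℕ} (n : ℤ × ℤ) (ha : 0 ≤ a) (hay : a ≤ y)
    (hP : |P| ≤ C * (1 + (y * n.1) ^ 2) ^ k * (1 + (y * n.2) ^ 2) ^ k) :
    ‖gaussWeight y n * P‖ ≤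
      C * (k ! * exp 1) ^ 2 * exp (-a ^ 2 * ((n.1 : ℝ) ^ 2 + (n.2 : ℝ) ^ 2)) := by
  have hw : gaussWeight y n = exp (-2 * ((y * n.1) ^ 2 + (y * n.2) ^ 2)) := by
    unfold gaussWeight
    ring_nf
  have hbound := abs_exp_neg_two_mul_le (sq_nonneg _) (sq_nonneg _) hP
  rw [Real.norm_eq_abs, hw]
  refine hbound.trans (mul_le_mul_of_nonneg_left (exp_le_exp.2 ?_) ?_)
  · have := mul_le_mul_of_nonneg_right (pow_le_pow_left₀ ha hay 2)
      (by positivity : (0 : ℝ) ≤ (n.1 : ℝ) ^ 2 + (n.2 : ℝ) ^ 2)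
    linarith
  · exact nonneg_of_mul_nonneg_left ((abs_nonneg _).trans hbound) (exp_pos _)

theorem summable_gaussWeight_mul {y C : ℝ} {k : ℕ} {P : ℤ × ℤ → ℝ} (hy : 0 < y)
    (hP : ∀ n, |P n| ≤ C * (1 + (y * n.1) ^ 2) ^ k * (1 + (y * n.2) ^ 2) ^ k) :
    Summable fun n => gaussWeight y n * P n :=
  ((summable_exp_neg_mul_sq_add_sq (pow_pos hy 2)).mul_left _).of_norm_bounded
    fun n => norm_gaussWeight_mul_le n hy.le le_rfl (hP n)

theorem hasDerivAt_gaussWeight_mul_Apoly (n : ℤ × ℤ) (y : ℝ) :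
    HasDerivAt (fun z => gaussWeight z n * Apoly z n.1 n.2)
      (gaussWeight y n * (Bpoly y n.1 n.2 + Epoly y n.1 n.2)) y := by
  refine HasDerivAt.congr_deriv (f' := _) (by
    unfold gaussWeight Apoly
    apply_rules (maxDepth := 200) [HasDerivAt.exp, HasDerivAt.pow, HasDerivAt.sub, HasDerivAt.add,
      HasDerivAt.mul, hasDerivAt_id', hasDerivAt_const]) ?_
  unfold gaussWeight Bpoly Epoly
  ring

theorem norm_gaussWeight_mul_Bpoly_add_Epoly_le {a y : ℝ} (n : ℤ × ℤ) (ha : 0 < a) (hay : a ≤ y) :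
    ‖gaussWeight y n * (Bpoly y n.1 n.2 + Epoly y n.1 n.2)‖ ≤
      712 / a * (4 ! * exp 1) ^ 2 * exp (-a ^ 2 * ((n.1 : ℝ) ^ 2 + (n.2 : ℝ) ^ 2)) := by
  have hy := ha.trans_le hay
  refine norm_gaussWeight_mul_le n ha.le hay ?_
  calc |Bpoly y n.1 n.2 + Epoly y n.1 n.2| ≤ |Bpoly y n.1 n.2| + |Epoly y n.1 n.2| :=
        abs_add_le _ _
    _ ≤ 512 / y * (1 + (y * n.1) ^ 2) ^ 4 * (1 + (y * n.2) ^ 2) ^ 4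
        + 200 / y * (1 + (y * n.1) ^ 2) ^ 4 * (1 + (y * n.2) ^ 2) ^ 4 :=
        add_le_add (abs_Bpoly_le hy _ _) (abs_Epoly_le hy _ _)
    _ ≤ 712 / a * (1 + (y * n.1) ^ 2) ^ 4 * (1 + (y * n.2) ^ 2) ^ 4 := by
        rw [← add_mul, ← add_mul, ← add_div]
        gcongr
        norm_num

theorem tsum_gaussWeight_mul_Bpoly (y : ℝ) :
    ∑' n, gaussWeight y n * Bpoly y n.1 n.2 = qTwo y :=
  (tsum_subtype_eq_of_support_subset (s := {p | p ≠ (0, 0)}) fun p hp => by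
    rintro rfl
    simp [Bpoly] at hp).symm

theorem tsum_gaussWeight_mul_Epoly (y : ℝ) :
    ∑' n, gaussWeight y n * Epoly y n.1 n.2 = 0 :=
  tsum_eq_zero_of_comp_eq_neg (Equiv.prodComm ℤ ℤ) fun n => by
    simp only [gaussWeight, Epoly, Equiv.prodComm_apply, Prod.fst_swap, Prod.snd_swap]
    ring_nf

theorem tsum_gaussWeight_mul_Bpoly_add_Epoly {y : ℝ} (hy : 0 < y) :
    ∑' n, gaussWeight y n * (Bpoly y n.1 n.2 + Epoly y n.1 n.2) = qTwo y := by
  simp_rw [mul_add]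
  rw [(summable_gaussWeight_mul hy fun n => abs_Bpoly_le hy n.1 n.2).tsum_add
    (summable_gaussWeight_mul hy fun n => abs_Epoly_le hy n.1 n.2),
    tsum_gaussWeight_mul_Bpoly, tsum_gaussWeight_mul_Epoly, add_zero]

/-- `F` is differentiable on `(0,∞)` and its derivative there is `q₂`. -/
theorem Fdist_hasDerivAt : ∀ h : ℝ, 0 < h → HasDerivAt Fdist (qTwo h) h := by
  intro h hh
  have hmem : h ∈ Set.Ioi (h / 2) := half_lt_self hh
  rw [← tsum_gaussWeight_mul_Bpoly_add_Epoly hh]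
  exact hasDerivAt_tsum_of_isPreconnected
    ((summable_exp_neg_mul_sq_add_sq (pow_pos (half_pos hh) 2)).mul_left _)
    isOpen_Ioi isPreconnected_Ioi (fun n y _ => hasDerivAt_gaussWeight_mul_Apoly n y)
    (fun n y hy => norm_gaussWeight_mul_Bpoly_add_Epoly_le n (half_pos hh) hy.le) hmem
    (summable_gaussWeight_mul hh fun n => abs_Apoly_le h n.1 n.2) hmem
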